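/- For every N ≥ 2, the star discrepancy of the binary van der Corput sequence satisfies N·D*_N(Y₂) ≤ (log N)/(log 2) + 1. -/

import Mathlib

/-!
`vdc 2` satisfies `vdc 2 (2n) = vdc 2 n / 2` and `vdc 2 (2n+1) = (vdc 2 n + 1) / 2`. Hence the
even and odd indices of a dyadic block `[2^(k+1) c, 2^(k+1) (c+1))` are a dyadic block of size
`2^k` squeezed into `[0, 1/2)` and into `[1/2, 1)`; for a given `t` one of the two halves is
empty or full, so by induction on `k` such a block counts its points in `[0, t)` with an error
of at most one. Cutting `[0, N)` into dyadic blocks along the binary digits of `N` gives at most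
`Nat.size N ≤ log₂ N + 1` blocks.
-/

open scoped Classical
open Filter

/-- The b-adic radical inverse (van der Corput) function. -/
noncomputable def vdc (b n : ℕ) : ℝ :=
  ∑ j ∈ Finset.range (n + 1), ((n / b ^ j % b : ℕ) : ℝ) / (b : ℝ) ^ (j + 1)

/-- The star discrepancy of the first `N` terms of a sequence in `[0,1)`. -/
noncomputable def dstar (x : ℕ → ℝ) (N : ℕ) : ℝ :=
  ⨆ t : Set.Icc (0 : ℝ) 1,
    |(((Finset.range N).filter (fun n => x n ∈ Set.Ico (0 : ℝ) (t : ℝ))).card : ℝ) / N - (t : ℝ)|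

open Finset

section RadicalInverse

variable {b : ℕ}

lemma vdc_eq_sum_range (hb : 2 ≤ b) {n L : ℕ} (hn : n < b ^ L) :
    vdc b n = ∑ j ∈ range L, ((n / b ^ j % b : ℕ) : ℝ) / (b : ℝ) ^ (j + 1) := by
  have trunc : ∀ K K', n < b ^ K → K ≤ K' →
      ∑ j ∈ range K', ((n / b ^ j % b : ℕ) : ℝ) / (b : ℝ) ^ (j + 1) =
        ∑ j ∈ range K, ((n / b ^ j % b : ℕ) : ℝ) / (b : ℝ) ^ (j + 1) := by
    refine fun K K' hK hKK' => (sum_subset (range_subset_range.2 hKK') fun j _ hj => ?_).symm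
    have hj : n < b ^ j := hK.trans_le (Nat.pow_le_pow_right (by omega) (by simpa using hj))
    simp [Nat.div_eq_of_lt hj]
  have hn' : n < b ^ (n + 1) := (Nat.lt_pow_self (by omega)).trans (Nat.pow_lt_pow_succ (by omega))
  rw [vdc, ← trunc (n + 1) (max (n + 1) L) hn' (le_max_left _ _),
    trunc L (max (n + 1) L) hn (le_max_right _ _)]

lemma vdc_mul_add (hb : 2 ≤ b) (n : ℕ) {d : ℕ} (hd : d < b) :
    vdc b (b * n + d) = (d + vdc b n) / b := by
  have hn : n < b ^ n := Nat.lt_pow_self (by omega)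
  have hbn : b * n + d < b ^ (n + 1) := by
    calc b * n + d < b * (n + 1) := by rw [mul_add_one]; omega
      _ ≤ b ^ (n + 1) := by rw [pow_succ']; exact Nat.mul_le_mul_left b hn
  have hdigit : ∀ j, (b * n + d) / b ^ (j + 1) = n / b ^ j := fun j => by
    rw [pow_succ', ← Nat.div_div_eq_div_mul, Nat.mul_add_div (by omega), Nat.div_eq_of_lt hd,
      add_zero]
  rw [vdc_eq_sum_range hb hbn, vdc_eq_sum_range hb hn, sum_range_succ', add_div, sum_div,
    add_comm]
  congr 1
  · simp [Nat.mod_eq_of_lt hd]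
  · simp only [hdigit, pow_succ _ (_ + 1), div_div]

lemma vdc_nonneg (b n : ℕ) : 0 ≤ vdc b n := by
  unfold vdc; positivity

lemma vdc_lt_one (hb : 2 ≤ b) (n : ℕ) : vdc b n < 1 := by
  induction n using Nat.strong_induction_on with
  | _ n ih =>
  rcases n.eq_zero_or_pos with rfl | hn
  · simp [vdc]
  have hdigit : ((n % b : ℕ) : ℝ) + 1 ≤ b := by exact_mod_cast Nat.mod_lt n (by omega)
  have hhigh := ih (n / b) (Nat.div_lt_self hn hb)
  rw [← Nat.div_add_mod n b, vdc_mul_add hb _ (Nat.mod_lt n (by omega)),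
    div_lt_one (by positivity)]
  linarith

lemma vdc_two_mul (n : ℕ) : vdc 2 (2 * n) = vdc 2 n / 2 := by
  simpa using vdc_mul_add le_rfl n two_pos

lemma vdc_two_mul_add_one (n : ℕ) : vdc 2 (2 * n + 1) = (vdc 2 n + 1) / 2 := by
  rw [vdc_mul_add le_rfl n one_lt_two, Nat.cast_one, Nat.cast_ofNat, add_comm]

end RadicalInverse

lemma card_filter_range_two_mul (p : ℕ → Prop) [DecidablePred p] (n : ℕ) :
    #{r ∈ range (2 * n) | p r} =
      #{r ∈ range n | p (2 * r)} + #{r ∈ range n | p (2 * r + 1)} := by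
  simp only [card_filter, ← sum_add_distrib]
  induction n with
  | zero => simp
  | succ n ih => rw [mul_add_one, sum_range_succ, sum_range_succ, sum_range_succ, ih, add_assoc]

section Counting

noncomputable def countBelow (x : ℕ → ℝ) (a M : ℕ) (t : ℝ) : ℕ :=
  #{m ∈ range M | x (a + m) < t}

variable {x : ℕ → ℝ} {a M : ℕ} {t : ℝ}

lemma countBelow_add (x : ℕ → ℝ) (a M M' : ℕ) (t : ℝ) :
    countBelow x a (M + M') t = countBelow x a M t + countBelow x (a + M) M' t := by
  simp only [countBelow, card_filter, sum_range_add, add_assoc]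

lemma countBelow_eq_zero (hx : ∀ n, 0 ≤ x n) (ht : t ≤ 0) : countBelow x a M t = 0 := by
  simp only [countBelow, card_eq_zero, filter_eq_empty_iff, not_lt]
  exact fun n _ => ht.trans (hx _)

lemma countBelow_eq_self (hx : ∀ n, x n < 1) (ht : 1 ≤ t) : countBelow x a M t = M := by
  rw [countBelow, filter_true_of_mem fun n _ => (hx _).trans_le ht, card_range]

lemma countBelow_le_self (x : ℕ → ℝ) (a M : ℕ) (t : ℝ) : countBelow x a M t ≤ M :=
  (card_filter_le _ _).trans (card_range M).le

end Counting

lemma countBelow_vdc_two_two_mul_two_mul (a M : ℕ) (t : ℝ) :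
    countBelow (vdc 2) (2 * a) (2 * M) t =
      countBelow (vdc 2) a M (2 * t) + countBelow (vdc 2) a M (2 * t - 1) := by
  rw [countBelow, card_filter_range_two_mul]
  congr 2 <;> refine filter_congr fun m _ => ?_
  · rw [← mul_add, vdc_two_mul, div_lt_iff₀ two_pos, mul_comm]
  · rw [← add_assoc, ← mul_add, vdc_two_mul_add_one, div_lt_iff₀ two_pos]
    constructor <;> intro <;> linarith

lemma abs_countBelow_vdc_two_block_sub_le_one (k c : ℕ) {t : ℝ} (ht₀ : 0 ≤ t) (ht₁ : t ≤ 1) :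
    |(countBelow (vdc 2) (2 ^ k * c) (2 ^ k) t : ℝ) - 2 ^ k * t| ≤ 1 := by
  induction k generalizing t with
  | zero =>
    have h : (countBelow (vdc 2) c 1 t : ℝ) ≤ 1 := mod_cast countBelow_le_self (vdc 2) c 1 t
    simp only [pow_zero, one_mul, abs_sub_le_iff]
    constructor <;> linarith [(countBelow (vdc 2) c 1 t).cast_nonneg (α := ℝ)]
  | succ k ih =>
    rw [pow_succ', mul_assoc, countBelow_vdc_two_two_mul_two_mul, Nat.cast_add]
    rcases le_or_gt t (1 / 2) with ht | ht
    · rw [countBelow_eq_zero (t := 2 * t - 1) (vdc_nonneg 2) (by linarith)]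
      convert ih (t := 2 * t) (by linarith) (by linarith) using 2
      push_cast; ring
    · rw [countBelow_eq_self (t := 2 * t) (vdc_lt_one le_rfl) (by linarith)]
      convert ih (t := 2 * t - 1) (by linarith) (by linarith) using 2
      push_cast; ring

lemma abs_countBelow_vdc_two_sub_le_size (M : ℕ) {a : ℕ} (ha : 2 ^ M.size ∣ a) {t : ℝ}
    (ht₀ : 0 ≤ t) (ht₁ : t ≤ 1) : |(countBelow (vdc 2) a M t : ℝ) - M * t| ≤ M.size := by
  induction M using Nat.strong_induction_on generalizing a with
  | _ M ih =>
  rcases M.eq_zero_or_pos with rfl | hM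
  · simp [countBelow]
  obtain ⟨k, hk⟩ : ∃ k, M.size = k + 1 := ⟨M.size - 1, by have := Nat.size_pos.2 hM; omega⟩
  have hlow : 2 ^ k ≤ M := Nat.lt_size.1 (by omega)
  have hhigh : M < 2 ^ (k + 1) := hk ▸ Nat.lt_size_self M
  obtain ⟨M', rfl⟩ := Nat.exists_eq_add_of_le hlow
  have hM' : M'.size ≤ k := Nat.size_le.2 (by rw [pow_succ] at hhigh; omega)
  obtain ⟨c, rfl⟩ : 2 ^ k ∣ a := (pow_dvd_pow 2 (by omega)).trans ha
  have hblock := abs_le.1 (abs_countBelow_vdc_two_block_sub_le_one k c ht₀ ht₁)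
  have hrest := abs_le.1 <| ih M' (by omega) (a := 2 ^ k * c + 2 ^ k)
    ((pow_dvd_pow 2 hM').trans (dvd_add (dvd_mul_right _ _) dvd_rfl))
  have hM'cast : (M'.size : ℝ) ≤ k := mod_cast hM'
  rw [countBelow_add, hk, abs_le]
  push_cast
  constructor <;> linarith [hblock.1, hblock.2, hrest.1, hrest.2]

lemma mul_dstar_le {x : ℕ → ℝ} {N : ℕ} {B : ℝ}
    (h : ∀ t ∈ Set.Icc (0 : ℝ) 1, |(#{n ∈ range N | x n ∈ Set.Ico 0 t} : ℝ) - N * t| ≤ B) :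
    N * dstar x N ≤ B := by
  rcases N.eq_zero_or_pos with rfl | hN
  · simpa using h 0 (by simp)
  have hN' : (0 : ℝ) < N := mod_cast hN
  have : Nonempty (Set.Icc (0 : ℝ) 1) := ⟨⟨0, by simp⟩⟩
  rw [← le_div_iff₀' hN']
  refine ciSup_le fun ⟨t, ht⟩ => (le_div_iff₀' hN').2 ?_
  calc (N : ℝ) * |(#{n ∈ range N | x n ∈ Set.Ico 0 t} : ℝ) / N - t|
      = |N * ((#{n ∈ range N | x n ∈ Set.Ico 0 t} : ℝ) / N - t)| := by
        rw [abs_mul, abs_of_pos hN']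
    _ = |(#{n ∈ range N | x n ∈ Set.Ico 0 t} : ℝ) - N * t| := by
        rw [mul_sub, mul_div_cancel₀ _ hN'.ne']
    _ ≤ B := h t ht

lemma card_filter_mem_Ico_eq_countBelow {x : ℕ → ℝ} (hx : ∀ n, 0 ≤ x n) (N : ℕ) (t : ℝ) :
    #{n ∈ range N | x n ∈ Set.Ico 0 t} = countBelow x 0 N t := by
  simp only [countBelow, zero_add, Set.mem_Ico, hx, true_and]

lemma Nat.size_le_log_div_log_two_add_one (n : ℕ) :
    (n.size : ℝ) ≤ Real.log n / Real.log 2 + 1 := by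
  have h : n.size ≤ Nat.log 2 n + 1 := Nat.size_le.2 (Nat.lt_pow_succ_log_self one_lt_two n)
  calc (n.size : ℝ) ≤ Nat.log 2 n + 1 := mod_cast h
    _ ≤ Real.log n / Real.log 2 + 1 := by
      rw [Real.log_div_log]
      gcongr
      exact_mod_cast Real.natLog_le_logb n 2

theorem vdc_star_discrepancy_bound_general (N : ℕ) :
    (N : ℝ) * dstar (vdc 2) N ≤ Real.log N / Real.log 2 + 1 := by
  refine mul_dstar_le fun t ⟨ht₀, ht₁⟩ => ?_
  rw [card_filter_mem_Ico_eq_countBelow (vdc_nonneg 2)]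
  exact (abs_countBelow_vdc_two_sub_le_size N (dvd_zero _) ht₀ ht₁).trans
    (Nat.size_le_log_div_log_two_add_one N)

/-- Van der Corput's 1935 estimate: `N D*_N(Y₂) ≤ log N / log 2 + 1` for all `N ≥ 2`. -/
theorem vdc_star_discrepancy_bound (N : ℕ) (hN : 2 ≤ N) :
    (N : ℝ) * dstar (vdc 2) N ≤ Real.log N / Real.log 2 + 1 :=
  vdc_star_discrepancy_bound_general N
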